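/- arXiv:2211.04956 — 3 statements merged into one kernel-verified Lean document; each statement's English description precedes it below -/
import Mathlib

section
/- Let k ≥ 2, p > k+1, and H ⊆ [p]^m with k-Natarajan dimension d ≤ m. Then |H| ≤ k^{m-d} · ∑_{i=0}^d C(m,i) · C(p, k+1)^i. -/
open Finset

/-- `H ⊆ [p]^[m]` `k`-Natarajan shatters the set `S` of coordinates. -/
def kNatShatters {m p : ℕ} (k : ℕ) (H : Finset (Fin m → Fin p)) (S : Finset (Fin m)) : Prop :=
  ∃ y : Fin m → Finset (Fin p),
    (∀ i ∈ S, (y i).card = k + 1) ∧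
    ∀ g : Fin m → Fin p, (∀ i ∈ S, g i ∈ y i) → ∃ f ∈ H, ∀ i ∈ S, f i = g i

private def cse (m : ℕ) : Fin m ↪ Fin (m + 1) :=
  ⟨Fin.castSucc, Fin.castSucc_injective m⟩

private lemma sub_le_choose : ∀ (a k : ℕ), a - k ≤ a.choose (k + 1) := by
  intro a
  induction a with
  | zero => intro k; simp
  | succ a ih =>
    intro k
    rcases Nat.lt_or_ge a k with h | h
    · have : a + 1 - k = 0 := by omega
      simp [this]
    · have h1 := ih k
      have h2 : 0 < a.choose k := Nat.choose_pos h
      rw [Nat.choose_succ_succ]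
      simp only [Nat.succ_eq_add_one]
      omega

private lemma le_choose : ∀ (p : ℕ) {j : ℕ}, 1 ≤ j → j < p → p ≤ p.choose j := by
  intro p
  induction p with
  | zero => omega
  | succ p ih =>
    intro j h1 h2
    obtain ⟨j, rfl⟩ : ∃ j', j = j' + 1 := ⟨j - 1, by omega⟩
    rcases Nat.eq_zero_or_pos j with rfl | hj
    · simp [Nat.choose_one_right]
    rcases eq_or_lt_of_le (show j + 1 ≤ p by omega) with rfl | hjp
    · rw [Nat.choose_succ_self_right]
    · have h3 := ih (show 1 ≤ j by omega) (show j < p by omega)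
      have h4 : 0 < p.choose (j + 1) := Nat.choose_pos (by omega)
      rw [Nat.choose_succ_succ]
      simp only [Nat.succ_eq_add_one]
      omega

private lemma sum_identity (m e q : ℕ) :
    ∑ i ∈ range (e + 2), (m + 1).choose i * q ^ i
      = ∑ i ∈ range (e + 2), m.choose i * q ^ i
        + q * ∑ i ∈ range (e + 1), m.choose i * q ^ i := by
  have h1 : ∀ i, (m + 1).choose (i + 1) * q ^ (i + 1)
      = m.choose (i + 1) * q ^ (i + 1) + m.choose i * q ^ i * q := by
    intro i
    rw [Nat.choose_succ_succ']
    ring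
  rw [Finset.sum_range_succ' (fun i => (m + 1).choose i * q ^ i),
    Finset.sum_range_succ' (fun i => m.choose i * q ^ i),
    mul_comm q (∑ i ∈ range (e + 1), m.choose i * q ^ i), Finset.sum_mul]
  simp only [h1, Finset.sum_add_distrib]
  simp [Nat.choose_zero_right]
  omega

private lemma main_bound {p k : ℕ} (hk : 2 ≤ k) (hp : k + 1 < p) :
    ∀ m d, d ≤ m → ∀ H : Finset (Fin m → Fin p),
      (∀ S : Finset (Fin m), kNatShatters k H S → S.card ≤ d) →
      H.card ≤ k ^ (m - d) * ∑ i ∈ range (d + 1), m.choose i * (p.choose (k + 1)) ^ i := by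
  intro m
  induction m with
  | zero =>
    intro d hd H _
    interval_cases d
    have h1 : H.card ≤ 1 := by
      have := card_le_univ H
      simpa using this
    simpa using h1
  | succ m ih =>
    intro d hd H hdim
    rcases eq_or_lt_of_le hd with rfl | hdm
    · -- trivial case: d = m + 1
      have hq : p ≤ p.choose (k + 1) := le_choose p (by omega) hp
      have h1 : H.card ≤ p ^ (m + 1) := by
        have := card_le_univ H
        simpa [Fintype.card_fun] using this
      have h2 : p ^ (m + 1) ≤ (p.choose (k + 1) + 1) ^ (m + 1) :=
        Nat.pow_le_pow_left (by omega) _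
      have h3 : (p.choose (k + 1) + 1) ^ (m + 1)
          = ∑ i ∈ range (m + 1 + 1), (m + 1).choose i * (p.choose (k + 1)) ^ i := by
        rw [add_pow]
        refine sum_congr rfl fun i _ => ?_
        push_cast
        ring
      rw [Nat.sub_self, pow_zero, one_mul]
      omega
    · -- d ≤ m
      have hdm' : d ≤ m := by omega
      set q := p.choose (k + 1) with hqdef
      set A : (Fin m → Fin p) → Finset (Fin p) :=
        fun h => univ.filter fun v => Fin.snoc h v ∈ H with hA
      set H' : Finset (Fin m → Fin p) := univ.filter fun h => (A h).Nonempty with hH'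
      set ps : Finset (Finset (Fin p)) := powersetCard (k + 1) univ with hps
      have hinit : ∀ f ∈ H, Fin.init f ∈ H' := by
        intro f hf
        refine mem_filter.mpr ⟨mem_univ _, ⟨f (Fin.last m), mem_filter.mpr ⟨mem_univ _, ?_⟩⟩⟩
        rwa [Fin.snoc_init_self]
      have hcard : H.card = ∑ h ∈ H', (A h).card := by
        rw [card_eq_sum_card_fiberwise hinit]
        refine sum_congr rfl fun h hh => ?_
        refine card_bij (fun f _ => f (Fin.last m)) ?_ ?_ ?_
        · intro f hf
          obtain ⟨hfH, hfi⟩ := mem_filter.mp hf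
          refine mem_filter.mpr ⟨mem_univ _, ?_⟩
          show Fin.snoc h (f (Fin.last m)) ∈ H
          rw [← hfi, Fin.snoc_init_self]
          exact hfH
        · intro f1 hf1 f2 hf2 he
          obtain ⟨_, hfi1⟩ := mem_filter.mp hf1
          obtain ⟨_, hfi2⟩ := mem_filter.mp hf2
          have he' : f1 (Fin.last m) = f2 (Fin.last m) := he
          rw [← Fin.snoc_init_self f1, ← Fin.snoc_init_self f2, hfi1, hfi2, he']
        · intro v hv
          refine ⟨Fin.snoc h v, mem_filter.mpr ⟨(mem_filter.mp hv).2, ?_⟩, ?_⟩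
          · rw [Fin.init_snoc]
          · simp
      -- dimension of H'
      have hdim' : ∀ S : Finset (Fin m), kNatShatters k H' S → S.card ≤ d := by
        intro S hS
        obtain ⟨y, hy1, hy2⟩ := hS
        have hshat : kNatShatters k H (S.map (cse m)) := by
          refine ⟨Fin.snoc y ∅, ?_, ?_⟩
          · intro i hi
            obtain ⟨j, hj, rfl⟩ := mem_map.mp hi
            simpa [cse, Fin.snoc_castSucc] using hy1 j hj
          · intro g hg
            obtain ⟨f', hf', hfg⟩ := hy2 (Fin.init g) (fun i hi => by
              have := hg (cse m i) (mem_map_of_mem _ hi)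
              simpa [cse, Fin.snoc_castSucc, Fin.init] using this)
            obtain ⟨v, hv⟩ := (mem_filter.mp hf').2
            have hvH : Fin.snoc f' v ∈ H := (mem_filter.mp hv).2
            refine ⟨Fin.snoc f' v, hvH, ?_⟩
            intro i hi
            obtain ⟨j, hj, rfl⟩ := mem_map.mp hi
            simpa [cse, Fin.snoc_castSucc, Fin.init] using hfg j hj
        have := hdim _ hshat
        simpa using this
      -- dimension of the H_T's
      have hdimT : ∀ T ∈ ps, ∀ S : Finset (Fin m),
          kNatShatters k (univ.filter fun h => T ⊆ A h) S → S.card + 1 ≤ d := by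
        intro T hT S hS
        obtain ⟨hTsub, hTcard⟩ := mem_powersetCard.mp hT
        obtain ⟨y, hy1, hy2⟩ := hS
        have hshat : kNatShatters k H (insert (Fin.last m) (S.map (cse m))) := by
          refine ⟨Fin.snoc y T, ?_, ?_⟩
          · intro i hi
            rcases mem_insert.mp hi with rfl | hi
            · simpa [Fin.snoc_last] using hTcard
            · obtain ⟨j, hj, rfl⟩ := mem_map.mp hi
              simpa [cse, Fin.snoc_castSucc] using hy1 j hj
          · intro g hg
            obtain ⟨h, hh, hfg⟩ := hy2 (Fin.init g) (fun i hi => by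
              have := hg (cse m i) (mem_insert_of_mem (mem_map_of_mem _ hi))
              simpa [cse, Fin.snoc_castSucc, Fin.init] using this)
            have hTA : T ⊆ A h := (mem_filter.mp hh).2
            have hgl : g (Fin.last m) ∈ T := by
              have := hg (Fin.last m) (mem_insert_self _ _)
              simpa [Fin.snoc_last] using this
            have hmem : Fin.snoc h (g (Fin.last m)) ∈ H := (mem_filter.mp (hTA hgl)).2
            refine ⟨_, hmem, ?_⟩
            intro i hi
            rcases mem_insert.mp hi with rfl | hi
            · simp [Fin.snoc_last]
            · obtain ⟨j, hj, rfl⟩ := mem_map.mp hi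
              simpa [cse, Fin.snoc_castSucc, Fin.init] using hfg j hj
        have hcard2 := hdim _ hshat
        have hnotmem : Fin.last m ∉ S.map (cse m) := by
          intro hmem
          obtain ⟨j, _, hj⟩ := mem_map.mp hmem
          exact absurd hj (Fin.castSucc_lt_last j).ne
        rwa [card_insert_of_notMem hnotmem, card_map] at hcard2
      -- main counting step
      have step : H.card ≤ k * H'.card
          + ∑ T ∈ ps, (univ.filter fun h => T ⊆ A h).card := by
        rw [hcard]
        calc ∑ h ∈ H', (A h).card
            ≤ ∑ h ∈ H', (k + (ps.filter fun T => T ⊆ A h).card) := by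
              refine sum_le_sum fun h _ => ?_
              have h1 : (ps.filter fun T => T ⊆ A h) = (A h).powersetCard (k + 1) := by
                ext T
                simp only [hps, mem_filter, mem_powersetCard]
                constructor
                · rintro ⟨⟨_, hc⟩, hs⟩; exact ⟨hs, hc⟩
                · rintro ⟨hs, hc⟩; exact ⟨⟨subset_univ _, hc⟩, hs⟩
              rw [h1, card_powersetCard]
              have := sub_le_choose (A h).card k
              omega
          _ = k * H'.card + ∑ h ∈ H', (ps.filter fun T => T ⊆ A h).card := by
              rw [sum_add_distrib, sum_const, smul_eq_mul, mul_comm]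
          _ ≤ k * H'.card + ∑ T ∈ ps, (univ.filter fun h => T ⊆ A h).card := by
              gcongr
              calc ∑ h ∈ H', (ps.filter fun T => T ⊆ A h).card
                  = ∑ h ∈ H', ∑ T ∈ ps, (if T ⊆ A h then 1 else 0) := by
                    refine sum_congr rfl fun h _ => ?_
                    rw [card_filter]
                _ = ∑ T ∈ ps, ∑ h ∈ H', (if T ⊆ A h then 1 else 0) := Finset.sum_comm
                _ ≤ ∑ T ∈ ps, (univ.filter fun h => T ⊆ A h).card := by
                    refine sum_le_sum fun T _ => ?_
                    rw [← card_filter]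
                    exact card_le_card (filter_subset_filter _ (subset_univ H'))
      have hpscard : ps.card = q := by
        rw [hps, card_powersetCard, card_univ, Fintype.card_fin]
      -- now case on d
      match d, hdm with
      | 0, _ =>
        have hTempty : ∀ T ∈ ps, (univ.filter fun h => T ⊆ A h) = ∅ := by
          intro T hT
          by_contra hne
          obtain ⟨h, hh⟩ := nonempty_of_ne_empty hne
          have hshat : kNatShatters k (univ.filter fun h => T ⊆ A h) ∅ :=
            ⟨fun _ => ∅, by simp, fun g _ => ⟨h, hh, by simp⟩⟩
          have := hdimT T hT ∅ hshat
          simp at this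
        have hzero : ∑ T ∈ ps, (univ.filter fun h => T ⊆ A h).card = 0 := by
          refine sum_eq_zero fun T hT => ?_
          rw [hTempty T hT, card_empty]
        have hH'b := ih 0 (Nat.zero_le m) H' hdim'
        have hsum2 : ∑ i ∈ range (0 + 1), (m + 1).choose i * q ^ i = 1 := by simp
        rw [Nat.sub_zero, hsum2, mul_one]
        calc H.card ≤ k * H'.card := by omega
          _ ≤ k * k ^ m := Nat.mul_le_mul_left k (by simpa using hH'b)
          _ = k ^ (m + 1) := by rw [pow_succ, mul_comm]
      | e + 1, hdm =>
        have h1 := ih (e + 1) (by omega) H' hdim'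
        have h2 : ∀ T ∈ ps, (univ.filter fun h => T ⊆ A h).card
            ≤ k ^ (m - e) * ∑ i ∈ range (e + 1), m.choose i * q ^ i := by
          intro T hT
          exact ih e (by omega) _ (fun S hS => by have := hdimT T hT S hS; omega)
        have h3 : ∑ T ∈ ps, (univ.filter fun h => T ⊆ A h).card
            ≤ q * (k ^ (m - e) * ∑ i ∈ range (e + 1), m.choose i * q ^ i) := by
          calc ∑ T ∈ ps, (univ.filter fun h => T ⊆ A h).card
              ≤ ps.card * (k ^ (m - e) * ∑ i ∈ range (e + 1), m.choose i * q ^ i) := by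
                rw [← smul_eq_mul, ← sum_const]
                exact sum_le_sum h2
            _ = _ := by rw [hpscard]
        have hexp : k * k ^ (m - (e + 1)) = k ^ (m - e) := by
          rw [← pow_succ']
          congr 1
          omega
        have hexp2 : m + 1 - (e + 1) = m - e := by omega
        calc H.card ≤ k * H'.card + ∑ T ∈ ps, (univ.filter fun h => T ⊆ A h).card := step
          _ ≤ k * (k ^ (m - (e + 1)) * ∑ i ∈ range (e + 2), m.choose i * q ^ i)
              + q * (k ^ (m - e) * ∑ i ∈ range (e + 1), m.choose i * q ^ i) := by
              gcongr
          _ = k ^ (m - e) * (∑ i ∈ range (e + 2), m.choose i * q ^ i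
              + q * ∑ i ∈ range (e + 1), m.choose i * q ^ i) := by
              rw [← mul_assoc, hexp]
              ring
          _ = k ^ (m + 1 - (e + 1)) * ∑ i ∈ range (e + 2), (m + 1).choose i * q ^ i := by
              rw [hexp2, sum_identity]

/-- Corollary of Sauer's lemma for lists: if `k ≥ 2`, `p > k+1`, and the
`k`-Natarajan dimension of `H ⊆ [p]^m` is at most `d ≤ m`, then
`|H| ≤ k^(m-d) ∑_{i=0}^d C(m,i) C(p,k+1)^i`. -/
theorem stmt2 {m p d k : ℕ} (hk : 2 ≤ k) (hp : k + 1 < p) (hdm : d ≤ m)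
    (H : Finset (Fin m → Fin p))
    (hdim : ∀ S : Finset (Fin m), kNatShatters k H S → S.card ≤ d) :
    H.card ≤ k ^ (m - d) *
      ∑ i ∈ Finset.range (d + 1), m.choose i * (p.choose (k + 1)) ^ i :=
  main_bound hk hp m d hdm H hdim
end

section
/- Let H ⊆ [p]^m be a finite class such that every vertex of its one-inclusion graph has k-degree at most D (more generally, such that every nonempty subclass contains a vertex of k-degree at most D within that subclass's one-inclusion graph). If the average k-degree of every subclass of H is at most D, then there exists a k-list orientation σ of G(H) with maximum k-outdegree at most D. -/
/-!
Peel off vertices: every nonempty subclass has a vertex `v` of `k`-degree at most `D`. Orient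
`H \ {v}` recursively and extend to `H` by keeping an edge `e` of size at most `k` whole and
orienting a larger edge `e` like its trace `e \ {v}` on `H \ {v}`. Then `v` only misses edges of
size `> k`, of which it has at most `D`, while no other vertex gains outdegree.
-/

/-- The edge of the one-inclusion graph of `G ⊆ [p]^m` in direction `i` through `v`. -/
def edge {m p : ℕ} (G : Finset (Fin m → Fin p)) (i : Fin m) (v : Fin m → Fin p) :
    Finset (Fin m → Fin p) :=
  G.filter fun g => ∀ j, j ≠ i → g j = v j

open Finset

namespace OneInclusion

section ListOrientation

variable {α : Type*} {k : ℕ}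

/-- A `k`-list orientation, given as a function of the edge as a set, so that it is automatically
consistent along each edge. -/
def IsListOrientation (k : ℕ) (τ : Finset α → Finset α) : Prop :=
  ∀ e, τ e ⊆ e ∧ #(τ e) ≤ k

lemma isListOrientation_empty : IsListOrientation k (fun _ : Finset α => ∅) := by
  simp [IsListOrientation]

variable [DecidableEq α]

def extendOrientation (k : ℕ) (v : α) (τ : Finset α → Finset α) (e : Finset α) : Finset α :=
  if #e ≤ k then e else τ (e.erase v)

lemma IsListOrientation.extend {τ : Finset α → Finset α} (hτ : IsListOrientation k τ) (v : α) :
    IsListOrientation k (extendOrientation k v τ) := by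
  intro e
  unfold extendOrientation
  split_ifs with he
  · exact ⟨subset_rfl, he⟩
  · exact ⟨(hτ _).1.trans (erase_subset _ _), (hτ _).2⟩

lemma mem_extendOrientation_of_card_le {v w : α} {τ : Finset α → Finset α} {e : Finset α}
    (hw : w ∈ e) (he : #e ≤ k) : w ∈ extendOrientation k v τ e := by
  rwa [extendOrientation, if_pos he]

lemma extendOrientation_of_lt_card {v : α} {τ : Finset α → Finset α} {e : Finset α}
    (he : k < #e) : extendOrientation k v τ e = τ (e.erase v) := by
  rw [extendOrientation, if_neg (not_le.2 he)]

end ListOrientation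

variable {m p : ℕ}

lemma mem_edge_self {G : Finset (Fin m → Fin p)} (i : Fin m) {v : Fin m → Fin p} (h : v ∈ G) :
    v ∈ edge G i v := by
  simp [edge, h]

lemma edge_erase (G : Finset (Fin m → Fin p)) (i : Fin m) (v w : Fin m → Fin p) :
    edge (G.erase v) i w = (edge G i w).erase v := by
  ext g
  simp only [edge, mem_filter, mem_erase]
  tauto

def kDegree (k : ℕ) (G : Finset (Fin m → Fin p)) (v : Fin m → Fin p) : ℕ :=
  #{i | k < #(edge G i v)}

def kOutdegree (G : Finset (Fin m → Fin p)) (τ : Finset (Fin m → Fin p) → Finset (Fin m → Fin p))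
    (v : Fin m → Fin p) : ℕ :=
  #{i | v ∉ τ (edge G i v)}

variable {k : ℕ} {H : Finset (Fin m → Fin p)} {v : Fin m → Fin p}

lemma kOutdegree_extendOrientation_self_le (τ : Finset (Fin m → Fin p) → Finset (Fin m → Fin p))
    (hv : v ∈ H) : kOutdegree H (extendOrientation k v τ) v ≤ kDegree k H v := by
  refine card_le_card fun i => ?_
  simp only [mem_filter, mem_univ, true_and, ← not_le]
  exact mt (mem_extendOrientation_of_card_le (mem_edge_self i hv))

lemma kOutdegree_extendOrientation_le (τ : Finset (Fin m → Fin p) → Finset (Fin m → Fin p))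
    {w : Fin m → Fin p} (hw : w ∈ H) :
    kOutdegree H (extendOrientation k v τ) w ≤ kOutdegree (H.erase v) τ w := by
  refine card_le_card fun i => ?_
  simp only [mem_filter, mem_univ, true_and, edge_erase]
  intro hi
  have hk : k < #(edge H i w) :=
    not_le.1 (mt (mem_extendOrientation_of_card_le (mem_edge_self i hw)) hi)
  rwa [extendOrientation_of_lt_card hk] at hi

theorem exists_isListOrientation_kOutdegree_le {D : ℕ} (H : Finset (Fin m → Fin p))
    (hdeg : ∀ G ⊆ H, G.Nonempty → ∃ v ∈ G, kDegree k G v ≤ D) :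
    ∃ τ, IsListOrientation k τ ∧ ∀ w ∈ H, kOutdegree H τ w ≤ D := by
  induction H using Finset.strongInduction with
  | H H ih =>
  rcases H.eq_empty_or_nonempty with rfl | hne
  · exact ⟨_, isListOrientation_empty, by simp⟩
  obtain ⟨v, hv, hvD⟩ := hdeg H subset_rfl hne
  obtain ⟨τ, hτ, hτD⟩ :=
    ih _ (erase_ssubset hv) fun G hG => hdeg G (hG.trans (erase_subset _ _))
  refine ⟨extendOrientation k v τ, hτ.extend v, fun w hw => ?_⟩
  rcases eq_or_ne w v with rfl | hwv
  · exact (kOutdegree_extendOrientation_self_le τ hw).trans hvD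
  · exact (kOutdegree_extendOrientation_le τ hw).trans (hτD w (mem_erase.2 ⟨hwv, hw⟩))

end OneInclusion

open OneInclusion in
/-- If every nonempty subclass `G ⊆ H ⊆ [p]^m` has average `k`-degree at most `D`
(so in particular every nonempty subclass has a vertex of `k`-degree at most `D`
inside its own one-inclusion graph), then the one-inclusion graph of `H` admits a
`k`-list orientation with maximum `k`-outdegree at most `D`. -/
theorem stmt7 {m p k D : ℕ} (H : Finset (Fin m → Fin p))
    (havg : ∀ G : Finset (Fin m → Fin p), G ⊆ H → G.Nonempty →
      ∑ v ∈ G, (Finset.univ.filter fun i : Fin m => k < (edge G i v).card).card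
        ≤ D * G.card) :
    ∃ σ : Fin m → (Fin m → Fin p) → Finset (Fin m → Fin p),
      (∀ i v, v ∈ H → σ i v ⊆ edge H i v ∧ (σ i v).card ≤ k) ∧
      (∀ i v w, v ∈ H → w ∈ H → edge H i v = edge H i w → σ i v = σ i w) ∧
      ∀ v ∈ H, (Finset.univ.filter fun i : Fin m => v ∉ σ i v).card ≤ D := by
  have hdeg : ∀ G ⊆ H, G.Nonempty → ∃ v ∈ G, kDegree k G v ≤ D := fun G hG hne =>
    exists_le_of_sum_le hne <| (havg G hG hne).trans_eq (by rw [sum_const, smul_eq_mul, mul_comm])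
  obtain ⟨τ, hτ, hτD⟩ := exists_isListOrientation_kOutdegree_le H hdeg
  exact ⟨fun i w => τ (edge H i w), fun _ _ _ => hτ _, fun _ _ _ _ _ h => congrArg τ h, hτD⟩
end

section
/- Let k ≥ 2 and p > k+1, and let H ⊆ [p]^m have k-Natarajan dimension d_N and finite k-exponential dimension d_E. Then d_E ≤ 60 k² d_N log(p), where log is the natural logarithm. -/
/-!
Restricting `H` to the coordinates `S` does not increase the `k`-Natarajan dimension: with
`k + 1 ≥ 2` labels per coordinate, a shattered set of positions of `S` cannot repeat a coordinate.

A class on `n` coordinates is then bounded by a Sauer–Shelah recursion on the last coordinate.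
Each fibre over the first `n` coordinates takes at most `k` values plus one per `(k+1)`-set `T`
of values it contains, and the prefixes whose fibre contains `T` form a class whose shattered sets
extend, by the last coordinate with label set `T`, to shattered sets of the whole class. Solving
the recursion gives `|H|_S| ≤ (2B)^dN (k + 1/2)^dE` with `B = (p choose k+1)`, and comparing with
`(k+1)^dE` gives `dE ≤ 2(k+1) dN log(2B) ≤ 2(k+1)(k+2) dN log p`.
-/

open Finset

namespace kNatShatters

variable {m n p k : ℕ}

lemma empty_of_nonempty {H : Finset (Fin m → Fin p)} (hH : H.Nonempty) : kNatShatters k H ∅ :=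
  ⟨fun _ => ∅, by simp, fun _ _ => ⟨hH.choose, hH.choose_spec, by simp⟩⟩

lemma injOn_of_image_comp (hk : 1 ≤ k) {H : Finset (Fin m → Fin p)} {S : Fin n → Fin m}
    {T : Finset (Fin n)} (h : kNatShatters k (H.image (· ∘ S)) T) : Set.InjOn S T := by
  obtain ⟨y, hy_card, hy⟩ := h
  have hy_one_lt : ∀ l ∈ T, 1 < (y l).card := fun l hl => by have := hy_card l hl; omega
  intro i hi j hj hij
  by_contra hne
  have : Nonempty (Fin p) := ⟨(card_pos.1 (hy_one_lt i hi).le).choose⟩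
  choose! g₀ hg₀ using fun l (hl : l ∈ T) => card_pos.1 (hy_one_lt l hl).le
  obtain ⟨b, hb, hb_ne⟩ := exists_mem_ne (hy_one_lt j hj) (g₀ i)
  obtain ⟨f, hf, hfg⟩ := hy (Function.update g₀ j b) fun l hl => by
    rcases eq_or_ne l j with rfl | hlj
    · simpa using hb
    · simpa [hlj] using hg₀ l hl
  obtain ⟨h, -, rfl⟩ := mem_image.1 hf
  have hi' := hfg i hi
  have hj' := hfg j hj
  simp only [Function.comp_apply, Function.update_of_ne hne, Function.update_self, hij] at hi' hj'
  exact hb_ne (hj'.symm.trans hi')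

lemma of_image_comp {H : Finset (Fin m → Fin p)} {S : Fin n → Fin m} {T : Finset (Fin n)}
    (h : kNatShatters k (H.image (· ∘ S)) T) (hS : Set.InjOn S T) :
    kNatShatters k H (T.image S) := by
  classical
  rcases isEmpty_or_nonempty (Fin n) with hn | hn
  · obtain ⟨_, _, hy⟩ := h
    obtain ⟨_, hf, -⟩ := hy isEmptyElim (by simp)
    obtain ⟨h, hH, -⟩ := mem_image.1 hf
    simpa [T.eq_empty_of_isEmpty] using empty_of_nonempty ⟨h, hH⟩
  have hinv : ∀ i ∈ T, Function.invFunOn S T (S i) = i := fun i hi => hS.leftInvOn_invFunOn hi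
  obtain ⟨y, hy_card, hy⟩ := h
  refine ⟨fun c => y (Function.invFunOn S T c), ?_, fun g hg => ?_⟩
  · simpa +contextual [hinv] using hy_card
  · obtain ⟨f, hf, hfg⟩ := hy (g ∘ S) (by simpa +contextual [hinv] using hg)
    obtain ⟨h, hH, rfl⟩ := mem_image.1 hf
    exact ⟨h, hH, by simpa using hfg⟩

end kNatShatters

lemma card_le_of_kNatShatters_image_comp {m n p k d : ℕ} (hk : 1 ≤ k)
    {H : Finset (Fin m → Fin p)} (hH : ∀ S, kNatShatters k H S → S.card ≤ d) (S : Fin n → Fin m)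
    (T : Finset (Fin n)) (hT : kNatShatters k (H.image (· ∘ S)) T) : T.card ≤ d := by
  have hinj := hT.injOn_of_image_comp hk
  simpa [card_image_of_injOn hinj] using hH _ (hT.of_image_comp hinj)

section Sauer

variable {n p k : ℕ}

def lastVals (G : Finset (Fin (n + 1) → Fin p)) (g : Fin n → Fin p) : Finset (Fin p) :=
  univ.filter fun a => Fin.snoc g a ∈ G

lemma card_eq_sum_card_lastVals (G : Finset (Fin (n + 1) → Fin p)) :
    G.card = ∑ g ∈ G.image Fin.init, (lastVals G g).card := by
  classical
  rw [card_eq_sum_card_image Fin.init G]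
  refine sum_congr rfl fun g _ => ?_
  refine card_nbij' (fun f => f (Fin.last n)) (fun a => Fin.snoc g a) ?_ ?_ ?_ ?_
  · intro f hf
    obtain ⟨hfG, rfl⟩ := mem_filter.1 hf
    simpa [lastVals] using hfG
  · intro a ha
    simp_all [lastVals]
  · intro f hf
    obtain ⟨-, rfl⟩ := mem_filter.1 hf
    simp
  · intro a _
    simp

lemma kNatShatters.of_image_init {G : Finset (Fin (n + 1) → Fin p)} {S : Finset (Fin n)}
    (h : kNatShatters k (G.image Fin.init) S) : kNatShatters k G (S.map Fin.castSuccEmb) := by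
  obtain ⟨y, hy_card, hy⟩ := h
  refine ⟨Fin.snoc y ∅, by simpa using hy_card, fun g hg => ?_⟩
  obtain ⟨f', hf', hf'g⟩ := hy (Fin.init g) (by simpa [Fin.init] using hg)
  obtain ⟨f, hf, rfl⟩ := mem_image.1 hf'
  exact ⟨f, hf, by simpa [Fin.init] using hf'g⟩

lemma kNatShatters.cons_last {G : Finset (Fin (n + 1) → Fin p)} {S : Finset (Fin n)}
    {T : Finset (Fin p)} (hT : T.card = k + 1)
    (h : kNatShatters k ((G.image Fin.init).filter (T ⊆ lastVals G ·)) S) :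
    kNatShatters k G ((S.map Fin.castSuccEmb).cons (Fin.last n) (by simp)) := by
  obtain ⟨y, hy_card, hy⟩ := h
  refine ⟨Fin.snoc y T, by simpa [hT] using hy_card, fun g hg => ?_⟩
  simp only [mem_cons, mem_map, forall_eq_or_imp, Fin.snoc_last, forall_exists_index, and_imp] at hg
  obtain ⟨f', hf', hf'g⟩ := hy (Fin.init g) (by simpa [Fin.init] using hg.2)
  have hlast : Fin.snoc f' (g (Fin.last n)) ∈ G := by
    simpa [lastVals] using (mem_filter.1 hf').2 hg.1
  refine ⟨_, hlast, ?_⟩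
  simpa [Fin.init] using hf'g

lemma sum_card_powersetCard_lastVals (G : Finset (Fin (n + 1) → Fin p)) :
    ∑ g ∈ G.image Fin.init, ((lastVals G g).powersetCard (k + 1)).card =
      ∑ T ∈ univ.powersetCard (k + 1), ((G.image Fin.init).filter (T ⊆ lastVals G ·)).card := by
  have h : ∀ g, (lastVals G g).powersetCard (k + 1) =
      (univ.powersetCard (k + 1)).filter (· ⊆ lastVals G g) := fun g => by
    ext T; simp [and_comm]
  simp only [h, card_filter]
  exact sum_comm

end Sauer

/-- `d` is a strict upper bound on the size of shattered sets, so that `d = 0` is the empty class. -/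
def sauerBound (k B : ℕ) : ℕ → ℕ → ℕ
  | _, 0 => 0
  | 0, _ + 1 => 1
  | n + 1, d + 1 => k * sauerBound k B n (d + 1) + B * sauerBound k B n d

lemma le_add_choose_succ (k c : ℕ) : c ≤ k + c.choose (k + 1) := by
  induction c with
  | zero => omega
  | succ c ih =>
    rw [Nat.choose_succ_succ']
    rcases lt_or_ge c k with h | h
    · omega
    · have := Nat.choose_pos h
      omega

theorem card_le_sauerBound {p k : ℕ} :
    ∀ {n d : ℕ} (G : Finset (Fin n → Fin p)), (∀ S, kNatShatters k G S → S.card < d) →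
      G.card ≤ sauerBound k (p.choose (k + 1)) n d
  | _, 0, G, hG => by
    rcases G.eq_empty_or_nonempty with rfl | hne
    · simp [sauerBound]
    · simpa using hG ∅ (kNatShatters.empty_of_nonempty hne)
  | 0, d + 1, G, _ => by
    simpa [sauerBound] using card_le_one_of_subsingleton G
  | n + 1, d + 1, G, hG => by
    set G' := G.image Fin.init
    have hG' : G'.card ≤ sauerBound k (p.choose (k + 1)) n (d + 1) :=
      card_le_sauerBound G' fun S hS => by simpa using hG _ hS.of_image_init
    have hG'T : ∀ T ∈ univ.powersetCard (k + 1),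
        (G'.filter (T ⊆ lastVals G ·)).card ≤ sauerBound k (p.choose (k + 1)) n d :=
      fun T hT => card_le_sauerBound _ fun S hS => by
        simpa using hG _ (hS.cons_last (mem_powersetCard.1 hT).2)
    calc G.card = ∑ g ∈ G', (lastVals G g).card := card_eq_sum_card_lastVals G
      _ ≤ ∑ g ∈ G', (k + ((lastVals G g).powersetCard (k + 1)).card) :=
          sum_le_sum fun g _ => by simpa using le_add_choose_succ k (lastVals G g).card
      _ = k * G'.card + ∑ T ∈ univ.powersetCard (k + 1), (G'.filter (T ⊆ lastVals G ·)).card := by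
          rw [sum_add_distrib, sum_card_powersetCard_lastVals, sum_const, smul_eq_mul, mul_comm]
      _ ≤ k * sauerBound k (p.choose (k + 1)) n (d + 1)
            + p.choose (k + 1) * sauerBound k (p.choose (k + 1)) n d := by
          grw [hG', sum_le_sum hG'T]
          simp
      _ = sauerBound k (p.choose (k + 1)) (n + 1) (d + 1) := rfl

lemma sauerBound_le {k B : ℕ} {c ε : ℝ} (hc : 1 ≤ c) (hε : 0 ≤ ε) (hB : B ≤ c * ε) :
    ∀ n d, (sauerBound k B n (d + 1) : ℝ) ≤ c ^ d * (k + ε) ^ n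
  | 0, d => by simpa [sauerBound] using one_le_pow₀ hc
  | n + 1, 0 => by
    have ih := sauerBound_le (k := k) hc hε hB n 0
    simp only [sauerBound, mul_zero, add_zero, Nat.cast_mul, pow_zero, one_mul, pow_succ] at ih ⊢
    nlinarith [pow_nonneg (by positivity : (0 : ℝ) ≤ k + ε) n]
  | n + 1, d + 1 => by
    have ih₁ := sauerBound_le (k := k) hc hε hB n (d + 1)
    have ih₀ := sauerBound_le (k := k) hc hε hB n d
    have hx : (0 : ℝ) ≤ c ^ d * (k + ε) ^ n := by positivity
    calc (sauerBound k B (n + 1) (d + 1 + 1) : ℝ)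
        = k * sauerBound k B n (d + 1 + 1) + B * sauerBound k B n (d + 1) := by
          simp [sauerBound]
      _ ≤ k * (c ^ (d + 1) * (k + ε) ^ n) + (c * ε) * (c ^ d * (k + ε) ^ n) := by
          gcongr
      _ = c ^ (d + 1) * (k + ε) ^ (n + 1) := by ring

lemma two_mul_choose_le_pow {p : ℕ} (hp : 2 ≤ p) (r : ℕ) : 2 * p.choose r ≤ p ^ (r + 1) := by
  rw [pow_succ']
  exact Nat.mul_le_mul hp (Nat.choose_le_pow p r)

lemma le_mul_log_of_pow_le {k n d : ℕ} {C : ℝ}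
    (h : ((k : ℝ) + 1) ^ n ≤ C ^ d * (k + 1 / 2) ^ n) :
    (n : ℝ) ≤ 2 * (k + 1) * d * Real.log C := by
  have hq : ((k + 1) / (k + 1 / 2) : ℝ) ^ n ≤ C ^ d := by
    rwa [div_pow, div_le_iff₀ (by positivity)]
  have hlog : n * Real.log ((k + 1) / (k + 1 / 2)) ≤ d * Real.log C := by
    rw [← Real.log_pow, ← Real.log_pow]
    exact Real.log_le_log (by positivity) hq
  have hratio : 1 / (2 * (k + 1)) ≤ Real.log ((k + 1) / (k + 1 / 2) : ℝ) := by
    refine le_trans (le_of_eq ?_) (Real.one_sub_inv_le_log_of_pos (by positivity))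
    field_simp
    ring
  calc (n : ℝ) = 2 * (k + 1) * (n * (1 / (2 * (k + 1)))) := by field_simp
    _ ≤ 2 * (k + 1) * (n * Real.log ((k + 1) / (k + 1 / 2))) := by gcongr
    _ ≤ 2 * (k + 1) * d * Real.log C := by nlinarith

/-- If `k ≥ 2`, `p > k+1`, the `k`-Natarajan dimension of `H ⊆ [p]^m` is at most
`dN`, and `dE` is witnessed as a `k`-exponentially shattered size (some sequence
`S` of `dE` coordinates has `|H|_S| ≥ (k+1)^{dE}`), then
`dE ≤ 60 k² dN log p`. -/
theorem stmt13 {m p k dN dE : ℕ} (hk : 2 ≤ k) (hp : k + 1 < p)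
    (H : Finset (Fin m → Fin p))
    (hNat : ∀ S : Finset (Fin m), kNatShatters k H S → S.card ≤ dN)
    (hExp : ∃ S : Fin dE → Fin m, (k + 1) ^ dE ≤ (H.image fun h => h ∘ S).card) :
    (dE : ℝ) ≤ 60 * k ^ 2 * dN * Real.log p := by
  obtain ⟨S, hS⟩ := hExp
  set B := p.choose (k + 1)
  have hB : (1 : ℝ) ≤ B := by exact_mod_cast Nat.choose_pos hp.le
  have hcard : (k + 1) ^ dE ≤ sauerBound k B dE (dN + 1) :=
    hS.trans <| card_le_sauerBound _ fun T hT =>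
      Nat.lt_succ_of_le (card_le_of_kNatShatters_image_comp (by omega) hNat S T hT)
  have hpow : ((k : ℝ) + 1) ^ dE ≤ (2 * B) ^ dN * (k + 1 / 2) ^ dE :=
    le_trans (by exact_mod_cast hcard)
      (sauerBound_le (by linarith) (by norm_num) (by linarith) dE dN)
  have h2B : Real.log (2 * B) ≤ (k + 2) * Real.log p := by
    have h : (2 * B : ℝ) ≤ (p : ℝ) ^ (k + 2) := by
      exact_mod_cast two_mul_choose_le_pow (by omega) (k + 1)
    simpa using Real.log_le_log (by positivity) h
  have hk' : (2 : ℝ) ≤ k := by exact_mod_cast hk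
  have hlogp : 0 ≤ Real.log p := Real.log_nonneg (by exact_mod_cast (by omega : 1 ≤ p))
  calc (dE : ℝ) ≤ 2 * (k + 1) * dN * Real.log (2 * B) := le_mul_log_of_pow_le hpow
    _ ≤ 2 * (k + 1) * dN * ((k + 2) * Real.log p) := by gcongr
    _ ≤ 60 * k ^ 2 * dN * Real.log p := by
      rw [← mul_assoc, mul_right_comm _ (dN : ℝ)]
      gcongr ?_ * _ * _
      nlinarith
end
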